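/- Let f be a positive function on ℝ such that f(x) ≤ M ψ(q₁ x) for all x ∈ ℝ, for some M > 0 and q₁ ∈ (0, 1]. Then for every q₂ ∈ (0,1) and every σ ∈ (0, 1 − q₂²): (K_σ f)(x) ≤ (2/√3) M ψ(q₁ q₂ x) for all x ∈ ℝ. -/

import Mathlib

open MeasureTheory

/-- The Gaussian kernel `ψ(x) = π^{-1/2} exp(-x²)`. -/
noncomputable def gaussK (x : ℝ) : ℝ := (Real.sqrt Real.pi)⁻¹ * Real.exp (-x ^ 2)

/-- The scaled Gaussian kernel `ψ_σ(x) = σ⁻¹ ψ(x/σ)`. -/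
noncomputable def gaussKs (σ x : ℝ) : ℝ := σ⁻¹ * gaussK (x / σ)

/-- Convolution with `ψ_σ` : `K_σ f`. -/
noncomputable def convK (σ : ℝ) (f : ℝ → ℝ) : ℝ → ℝ := fun x => ∫ u, f u * gaussKs σ (x - u)

/-- `i`-fold application of `K_σ`, with `K_σ^0 f = f`. -/
noncomputable def convKiter (σ : ℝ) (f : ℝ → ℝ) : ℕ → ℝ → ℝ
  | 0 => f
  | i + 1 => convK σ (convKiter σ f i)

/-- The iterates `f_0 = f`, `f_{j+1} = f - (K_σ f_j - f_j)`. -/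
noncomputable def iterF (σ : ℝ) (f : ℝ → ℝ) : ℕ → ℝ → ℝ
  | 0 => f
  | j + 1 => fun x => f x - (convK σ (iterF σ f j) x - iterF σ f j x)

/-- `J_{σ,k} = {x : f_k(x) > f(x)/2}`. -/
def Jset (σ : ℝ) (f : ℝ → ℝ) (k : ℕ) : Set ℝ := {x | f x / 2 < iterF σ f k x}

-- `g_k = f_k 1_{J_{σ,k}} + (f/2) 1_{J_{σ,k}^c}`
open Classical in
noncomputable def gFun (σ : ℝ) (f : ℝ → ℝ) (k : ℕ) : ℝ → ℝ :=
  fun x => if x ∈ Jset σ f k then iterF σ f k x else f x / 2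

/-- `h_k = g_k / ∫ g_k`. -/
noncomputable def hFun (σ : ℝ) (f : ℝ → ℝ) (k : ℕ) : ℝ → ℝ :=
  fun x => gFun σ f k x / ∫ u, gFun σ f k u

/-!
Since `K_σ` has a nonnegative kernel, `f ≤ M ψ(q₁ ·)` gives `K_σ f ≤ M K_σ(ψ(q₁ ·))`, and the
convolution of two Gaussians is a Gaussian: with `s = 1 + q₁²σ²`,
`K_σ(ψ(q₁ ·))(x) = s^{-1/2} ψ(q₁ x / √s)`. As `s ≥ 1` and `q₂² s ≤ 1` for `σ < 1 - q₂²`, this is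
at most `ψ(q₁ q₂ x)`, and `1 ≤ 2/√3`.
-/

open Real

lemma gaussK_nonneg (x : ℝ) : 0 ≤ gaussK x := by
  unfold gaussK; positivity

lemma gaussKs_nonneg {σ : ℝ} (hσ : 0 ≤ σ) (x : ℝ) : 0 ≤ gaussKs σ x :=
  mul_nonneg (inv_nonneg.2 hσ) (gaussK_nonneg _)

lemma gaussK_le_gaussK {x y : ℝ} (h : y ^ 2 ≤ x ^ 2) : gaussK x ≤ gaussK y := by
  unfold gaussK; gcongr

lemma convK_mono {σ : ℝ} (hσ : 0 ≤ σ) {f g : ℝ → ℝ} (hfg : ∀ u, f u ≤ g u)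
    (hg : ∀ u, 0 ≤ g u) {x : ℝ} (hgx : Integrable fun u => g u * gaussKs σ (x - u)) :
    convK σ f x ≤ convK σ g x := by
  by_cases hfx : Integrable fun u => f u * gaussKs σ (x - u)
  · exact integral_mono hfx hgx fun u => mul_le_mul_of_nonneg_right (hfg u) (gaussKs_nonneg hσ _)
  · rw [convK, integral_undef hfx]
    exact integral_nonneg fun u => mul_nonneg (hg u) (gaussKs_nonneg hσ _)

lemma convK_const_mul (σ c : ℝ) (f : ℝ → ℝ) (x : ℝ) :
    convK σ (fun u => c * f u) x = c * convK σ f x := by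
  simp only [convK, mul_assoc, integral_const_mul]

/-- Completing the square in `(q u)² + ((x - u) / σ)²`. -/
lemma gaussK_mul_gaussKs_eq {σ : ℝ} (hσ : 0 < σ) (q x u : ℝ) :
    gaussK (q * u) * gaussKs σ (x - u) =
      (π * σ)⁻¹ * exp (-(q ^ 2 * x ^ 2 / (1 + q ^ 2 * σ ^ 2))) *
        exp (-((1 + q ^ 2 * σ ^ 2) / σ ^ 2) * (u - x / (1 + q ^ 2 * σ ^ 2)) ^ 2) := by
  have hs : 0 < 1 + q ^ 2 * σ ^ 2 := by positivity
  have hexp : -(q * u) ^ 2 + -((x - u) / σ) ^ 2 =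
      -(q ^ 2 * x ^ 2 / (1 + q ^ 2 * σ ^ 2)) +
        -((1 + q ^ 2 * σ ^ 2) / σ ^ 2) * (u - x / (1 + q ^ 2 * σ ^ 2)) ^ 2 := by
    field_simp; ring
  rw [mul_assoc, ← exp_add, ← hexp, exp_add, gaussKs, gaussK, gaussK]
  field_simp
  rw [sq_sqrt pi_pos.le]

lemma integrable_gaussK_mul_gaussKs {σ : ℝ} (hσ : 0 < σ) (q x : ℝ) :
    Integrable fun u => gaussK (q * u) * gaussKs σ (x - u) := by
  simp_rw [gaussK_mul_gaussKs_eq hσ]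
  exact ((integrable_exp_neg_mul_sq (by positivity)).comp_sub_right _).const_mul _

lemma convK_gaussK_comp_mul {σ : ℝ} (hσ : 0 < σ) (q x : ℝ) :
    convK σ (fun u => gaussK (q * u)) x =
      (√(1 + q ^ 2 * σ ^ 2))⁻¹ * gaussK (q * x / √(1 + q ^ 2 * σ ^ 2)) := by
  have hs : 0 < 1 + q ^ 2 * σ ^ 2 := by positivity
  simp_rw [convK, gaussK_mul_gaussKs_eq hσ, integral_const_mul,
    integral_sub_right_eq_self (fun u => exp (-((1 + q ^ 2 * σ ^ 2) / σ ^ 2) * u ^ 2)),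
    integral_gaussian, gaussK, div_pow, sq_sqrt hs.le, mul_pow]
  rw [div_div_eq_mul_div, sqrt_div' _ hs.le, sqrt_mul pi_pos.le, sqrt_sq hσ.le]
  field_simp
  rw [sq_sqrt pi_pos.le]

lemma convK_gaussK_comp_mul_le {σ : ℝ} (hσ : 0 < σ) {q r : ℝ}
    (hr : r ^ 2 * (1 + q ^ 2 * σ ^ 2) ≤ 1) (x : ℝ) :
    convK σ (fun u => gaussK (q * u)) x ≤ gaussK (q * r * x) := by
  have hs : 1 ≤ 1 + q ^ 2 * σ ^ 2 := by nlinarith [sq_nonneg (q * σ)]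
  rw [convK_gaussK_comp_mul hσ]
  refine (mul_le_of_le_one_left (gaussK_nonneg _) (inv_le_one_of_one_le₀ (one_le_sqrt.2 hs))).trans
    (gaussK_le_gaussK ?_)
  rw [div_pow, sq_sqrt (by linarith), le_div_iff₀ (by linarith)]
  calc (q * r * x) ^ 2 * (1 + q ^ 2 * σ ^ 2) = (q * x) ^ 2 * (r ^ 2 * (1 + q ^ 2 * σ ^ 2)) := by
        ring
    _ ≤ (q * x) ^ 2 := mul_le_of_le_one_right (sq_nonneg _) hr

theorem stmt18_general (f : ℝ → ℝ)
    (M q₁ : ℝ) (hM : 0 < M) (hq₁ : 0 < q₁) (hq₁' : q₁ ≤ 1)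
    (hfM : ∀ x, f x ≤ M * gaussK (q₁ * x)) :
    ∀ q₂ : ℝ, 0 < q₂ → q₂ < 1 → ∀ σ : ℝ, 0 < σ → σ < 1 - q₂ ^ 2 → ∀ x : ℝ,
      convK σ f x ≤ 2 / Real.sqrt 3 * M * gaussK (q₁ * q₂ * x) := by
  intro q₂ hq₂ hq₂' σ hσ hσ' x
  have hq₂σ : q₂ ^ 2 * (1 + q₁ ^ 2 * σ ^ 2) ≤ 1 := by
    have hq₁σ : q₁ ^ 2 * σ ^ 2 ≤ σ := by nlinarith [mul_le_one₀ hq₁' hq₁.le hq₁']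
    nlinarith
  have h23 : 1 ≤ 2 / √3 := by
    rw [one_le_div (by positivity), sqrt_le_left (by norm_num)]; norm_num
  calc convK σ f x ≤ convK σ (fun u => M * gaussK (q₁ * u)) x :=
        convK_mono hσ.le hfM (fun u => mul_nonneg hM.le (gaussK_nonneg _))
          ((integrable_gaussK_mul_gaussKs hσ q₁ x).const_mul M |>.congr
            (.of_forall fun u => (mul_assoc _ _ _).symm))
    _ = M * convK σ (fun u => gaussK (q₁ * u)) x := convK_const_mul σ M _ x
    _ ≤ M * gaussK (q₁ * q₂ * x) := by gcongr; exact convK_gaussK_comp_mul_le hσ hq₂σ x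
    _ ≤ 2 / √3 * M * gaussK (q₁ * q₂ * x) := by
        gcongr
        · exact gaussK_nonneg _
        · exact le_mul_of_one_le_left hM.le h23

/-- Lemma 15: if `f ≤ M ψ(q₁ ·)` then for every `q₂ ∈ (0,1)` and every
`σ ∈ (0, 1 − q₂²)`: `K_σ f ≤ (2/√3) M ψ(q₁ q₂ ·)`. -/
theorem stmt18 (f : ℝ → ℝ) (hf0 : ∀ x, 0 ≤ f x)
    (M q₁ : ℝ) (hM : 0 < M) (hq₁ : 0 < q₁) (hq₁' : q₁ ≤ 1)
    (hfM : ∀ x, f x ≤ M * gaussK (q₁ * x)) :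
    ∀ q₂ : ℝ, 0 < q₂ → q₂ < 1 → ∀ σ : ℝ, 0 < σ → σ < 1 - q₂ ^ 2 → ∀ x : ℝ,
      convK σ f x ≤ 2 / Real.sqrt 3 * M * gaussK (q₁ * q₂ * x) :=
  stmt18_general f M q₁ hM hq₁ hq₁' hfM
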